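/- arXiv:2501.13179 — 3 statements merged into one kernel-verified Lean document; each statement's English description precedes it below -/
import Mathlib

section
/- Let V be the (4n+4m)-dimensional complex vector space with basis of 1-covectors {φ^i, φ̄^i (1≤i≤2n), ψ^j, ψ̄^j (1≤j≤2m)} and Chevalley–Eilenberg differential determined by dφ^i = 0, dψ^{2j+1} = -λ η ∧ ψ^{2j+1}, dψ^{2j+2} = λ η̄ ∧ ψ^{2j+2} (and conjugate equations), where η = φ^1 + φ̄^2 + ... + φ^{2n-1} + φ̄^{2n}. Then the 2-form ω = (i/2)Σ_{k=1}^{2n} C_k φ^k ∧ φ̄^k + (1/2)Σ_{i=0}^{m-1}(B_i ψ^{2i+1} ∧ ψ̄^{2i+2} + B̄_i ψ̄^{2i+1} ∧ ψ^{2i+2}) with C_k real nonzero and B_i complex nonzero satisfies dω = 0. -/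
open ExteriorAlgebra

theorem aux_dmul_zero {V : Type*} [AddCommGroup V] [Module ℂ V]
    (d : ExteriorAlgebra ℂ V →ₗ[ℂ] ExteriorAlgebra ℂ V)
    (hleib : ∀ (v : V) (y : ExteriorAlgebra ℂ V),
      d (ι ℂ v * y) = d (ι ℂ v) * y - ι ℂ v * d y)
    (x y w : V) (c : ℂ)
    (hx : d (ι ℂ x) = -(c • (ι ℂ w * ι ℂ x)))
    (hy : d (ι ℂ y) = c • (ι ℂ w * ι ℂ y)) :
    d (ι ℂ x * ι ℂ y) = 0 := by
  have hsw : ι ℂ x * ι ℂ w = -(ι ℂ w * ι ℂ x) := by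
    have h := ι_add_mul_swap (R := ℂ) x w
    rw [add_eq_zero_iff_eq_neg] at h
    exact h
  rw [hleib, hx, hy]
  simp only [neg_mul, smul_mul_assoc, mul_smul_comm, ← mul_assoc, hsw, smul_neg, sub_self]

/-- On the (complexified) Chevalley–Eilenberg algebra generated by the
1-covectors `φ^i, φ̄^i, ψ^j, ψ̄^j` with the structure equations of
`N = N_{μ,P}` (where `η = φ¹ + φ̄² + ⋯ + φ^{2n-1} + φ̄^{2n}`), the invariant
2-form `ω = (i/2) Σ C_k φ^k∧φ̄^k + (1/2) Σ (B_i ψ^{2i+1}∧ψ̄^{2i+2} +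
B̄_i ψ̄^{2i+1}∧ψ^{2i+2})` is `d`-closed. (Indices are 0-based: `ψ^{2i+1}`
is `ψ ⟨2i⟩` and `ψ^{2i+2}` is `ψ ⟨2i+1⟩`.) -/
theorem invariant_symplectic_form_closed (n m : ℕ) (lam : ℝ) (hlam : lam ≠ 0)
    {V : Type*} [AddCommGroup V] [Module ℂ V]
    (φ φb : Fin (2 * n) → V) (ψ ψb : Fin (2 * m) → V)
    (d : ExteriorAlgebra ℂ V →ₗ[ℂ] ExteriorAlgebra ℂ V)
    (hleib : ∀ (v : V) (y : ExteriorAlgebra ℂ V),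
      d (ι ℂ v * y) = d (ι ℂ v) * y - ι ℂ v * d y)
    (η ηb : V)
    (hη : η = ∑ i : Fin (2 * n), if Even i.val then φ i else φb i)
    (hηb : ηb = ∑ i : Fin (2 * n), if Even i.val then φb i else φ i)
    (hdφ : ∀ i, d (ι ℂ (φ i)) = 0) (hdφb : ∀ i, d (ι ℂ (φb i)) = 0)
    (hdψ : ∀ j : Fin (2 * m), d (ι ℂ (ψ j)) =
      if Even j.val then -((lam : ℂ) • (ι ℂ η * ι ℂ (ψ j)))
      else (lam : ℂ) • (ι ℂ ηb * ι ℂ (ψ j)))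
    (hdψb : ∀ j : Fin (2 * m), d (ι ℂ (ψb j)) =
      if Even j.val then -((lam : ℂ) • (ι ℂ ηb * ι ℂ (ψb j)))
      else (lam : ℂ) • (ι ℂ η * ι ℂ (ψb j)))
    (C : Fin (2 * n) → ℝ) (hC : ∀ k, C k ≠ 0)
    (B : Fin m → ℂ) (hB : ∀ i, B i ≠ 0)
    (ω : ExteriorAlgebra ℂ V)
    (hω : ω = (Complex.I / 2) • ∑ k : Fin (2 * n), (C k : ℂ) • (ι ℂ (φ k) * ι ℂ (φb k))
      + (1 / 2 : ℂ) • ∑ j : Fin m,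
        (B j • (ι ℂ (ψ ⟨2 * j.val, by have := j.isLt; omega⟩) *
                ι ℂ (ψb ⟨2 * j.val + 1, by have := j.isLt; omega⟩))
         + starRingEnd ℂ (B j) • (ι ℂ (ψb ⟨2 * j.val, by have := j.isLt; omega⟩) *
                ι ℂ (ψ ⟨2 * j.val + 1, by have := j.isLt; omega⟩)))) :
    d ω = 0 := by
  subst hω
  rw [map_add, map_smul, map_smul, map_sum, map_sum]
  have h1 : ∀ k : Fin (2*n), d (ι ℂ (φ k) * ι ℂ (φb k)) = 0 := fun k => by
    rw [hleib, hdφ, hdφb, zero_mul, mul_zero, sub_zero]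
  have h2 : ∀ j : Fin m, d
        (B j • (ι ℂ (ψ ⟨2 * j.val, by have := j.isLt; omega⟩) *
                ι ℂ (ψb ⟨2 * j.val + 1, by have := j.isLt; omega⟩))
         + starRingEnd ℂ (B j) • (ι ℂ (ψb ⟨2 * j.val, by have := j.isLt; omega⟩) *
                ι ℂ (ψ ⟨2 * j.val + 1, by have := j.isLt; omega⟩))) = 0 := by
    intro j
    rw [map_add, map_smul, map_smul]
    rw [aux_dmul_zero d hleib (ψ ⟨2 * j.val, by have := j.isLt; omega⟩)
          (ψb ⟨2 * j.val + 1, by have := j.isLt; omega⟩) η ((lam : ℂ))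
          (by rw [hdψ]; simp [Nat.even_add_one])
          (by rw [hdψb]; simp [Nat.even_add_one])]
    rw [aux_dmul_zero d hleib (ψb ⟨2 * j.val, by have := j.isLt; omega⟩)
          (ψ ⟨2 * j.val + 1, by have := j.isLt; omega⟩) ηb ((lam : ℂ))
          (by rw [hdψb]; simp [Nat.even_add_one])
          (by rw [hdψ]; simp [Nat.even_add_one])]
    simp
  simp only [map_smul, h1, h2, smul_zero, Finset.sum_const_zero, add_zero]
end

section
/- Suppose there is no partition of {1, ..., 2m} into disjoint pairs (i,j) with λ_i + λ_j = 0. Then every 2-form lying in the span of {φ^0 ∧ φ̄^0} ∪ {φ^{i} ∧ φ^{j}, φ^{i} ∧ φ̄^{j}, φ̄^{i} ∧ φ̄^{j} : λ_i + λ_j = 0} is degenerate, i.e., its (2m+1)-st power vanishes. -/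
/-!
Expanding `ω ^ (2m+1)` writes it as a combination of wedge products of `4m+2` vectors, taken
pairwise from the generators. Label the vectors `φ⁰, φ̄⁰, φⁱ, φ̄ⁱ` by the `4m+2` elements of
`Bool ⊕ (Fin (2m) × Bool)` and give them the weights `0, 0, λᵢ, λᵢ`; every generator pairs two
labels of total weight zero. A product with a repeated label vanishes, so a nonzero term uses
each label exactly once: it is a perfect matching of the labels by weight-cancelling pairs, and
this matching exchanges the labels of weight in `S` with those of weight in `-S`. For `0 ∉ S` the
doubled labels `φⁱ, φ̄ⁱ` are the only ones involved, so `λ` itself takes values in `S` and in `-S`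
equally often. Hence each `c > 0` occurs as often as `-c`, the number of zeros is even because
`2m` is, and pairing `c` with `-c` and the zeros among themselves gives the excluded partition.
-/

open ExteriorAlgebra Function Set

namespace ExteriorAlgebra

variable {R M : Type*} [CommRing R] [AddCommGroup M] [Module R M]

theorem prod_ofFn_ι_mul_ι_eq_ιMulti {n : ℕ} (u : Fin n × Fin 2 → M) :
    (List.ofFn fun k => ι R (u (k, 0)) * ι R (u (k, 1))).prod =
      ιMulti R (n * 2) (u ∘ finProdFinEquiv.symm) := by
  rw [ιMulti_apply, List.ofFn_mul, List.prod_flatten, List.map_ofFn]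
  congr 1
  refine List.ofFn_inj.2 (funext fun k => ?_)
  simp only [List.ofFn_succ, List.ofFn_zero, List.prod_cons, List.prod_nil, mul_one,
    Function.comp_apply, finProdFinEquiv_symm_apply]
  congr 3 <;> simp [Fin.ext_iff, Fin.divNat, Fin.modNat]
  omega

theorem exists_injective_of_pow_ne_zero {L : Type*} (v : L → M) (E : Set (L × L)) {n : ℕ}
    {ω : ExteriorAlgebra R M}
    (hω : ω ∈ Submodule.span R ((fun e => ι R (v e.1) * ι R (v e.2)) '' E))
    (hn : ω ^ n ≠ 0) :
    ∃ g : Fin n × Fin 2 → L, Injective g ∧ ∀ k, (g (k, 0), g (k, 1)) ∈ E := by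
  contrapose! hn
  have hpow := Submodule.pow_mem_pow _ hω n
  rw [Submodule.span_pow, Submodule.span_eq_bot.2, Submodule.mem_bot] at hpow
  · exact hpow
  intro x hx
  obtain ⟨f, rfl⟩ := Set.mem_pow.1 hx
  choose e he hfe using fun k => (f k).2
  let g : Fin n × Fin 2 → L := fun p => ![(e p.1).1, (e p.1).2] p.2
  have hprod : (List.ofFn fun k => (f k : ExteriorAlgebra R M)).prod =
      ιMulti R (n * 2) ((v ∘ g) ∘ finProdFinEquiv.symm) := by
    rw [← prod_ofFn_ι_mul_ι_eq_ιMulti]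
    simp [g, hfe]
  rw [hprod]
  refine AlternatingMap.map_eq_zero_of_not_injective _ _ fun hinj => ?_
  obtain ⟨k, hk⟩ := hn g ((Equiv.injective_comp _ _).1 (hinj.of_comp (f := v)))
  exact hk (he k)

end ExteriorAlgebra

section Pairings

variable {α κ G : Type*}

theorem exists_perm_neg_of_bijective [AddGroup G] (w : α → G) {g : κ × Fin 2 → α}
    (hg : Bijective g) (hw : ∀ k, w (g (k, 0)) + w (g (k, 1)) = 0) :
    ∃ τ : Equiv.Perm α, ∀ x, w (τ x) = -w x := by
  let e := Equiv.ofBijective g hg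
  refine ⟨e.permCongr ((Equiv.refl κ).prodCongr Fin.revPerm), fun x => ?_⟩
  obtain ⟨⟨k, i⟩, rfl⟩ := e.surjective x
  fin_cases i
  · simpa [Equiv.permCongr_apply, e] using eq_neg_of_add_eq_zero_right (hw k)
  · simpa [Equiv.permCongr_apply, e] using eq_neg_of_add_eq_zero_left (hw k)

theorem card_preimage_neg [InvolutiveNeg G] (w : α → G) (τ : Equiv.Perm α)
    (hτ : ∀ x, w (τ x) = -w x) (S : Set G) : Nat.card (w ⁻¹' (-S)) = Nat.card (w ⁻¹' S) :=
  Nat.card_congr (τ.subtypeEquiv fun x => by simp [hτ]).symm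

theorem card_sumElim_preimage [Zero G] (w : α → G) (β : Type*) {S : Set G}
    (hS : (0 : G) ∉ S) :
    Nat.card (Sum.elim (fun _ : β => (0 : G)) (fun x : α × Bool => w x.1) ⁻¹' S) =
      2 * Nat.card (w ⁻¹' S) := by
  have h : Sum.elim (fun _ : β => (0 : G)) (fun x : α × Bool => w x.1) ⁻¹' S =
      Sum.inr '' ((w ⁻¹' S) ×ˢ (univ : Set Bool)) := by
    ext (b | x) <;> simp [hS]
  rw [h, Nat.card_image_of_injective Sum.inr_injective, Nat.card_congr (Equiv.Set.prod _ _),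
    Nat.card_prod]
  simp [mul_comm]

theorem even_card_preimage_zero [Finite α] [Zero G] [LinearOrder G] (w : α → G)
    (hα : Even (Nat.card α)) (h : Nat.card (w ⁻¹' Iio 0) = Nat.card (w ⁻¹' Ioi 0)) :
    Even (Nat.card (w ⁻¹' {0})) := by
  have hcompl : (w ⁻¹' {0})ᶜ = w ⁻¹' Iio 0 ∪ w ⁻¹' Ioi 0 := by
    ext; simp
  have hsplit := ncard_add_ncard_compl (w ⁻¹' {0})
  rw [hcompl, ncard_union_eq] at hsplit
  · simp only [← Nat.card_coe_set_eq] at hsplit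
    rw [← hsplit, h, Nat.even_add] at hα
    simpa [← two_mul] using hα
  · exact disjoint_left.2 fun x h₁ h₂ => lt_asymm h₁ h₂

theorem exists_involutive_fixedPointFree [Finite α] (h : Even (Nat.card α)) :
    ∃ σ : Equiv.Perm α, (∀ x, σ (σ x) = x) ∧ ∀ x, σ x ≠ x := by
  obtain ⟨k, hk⟩ := h
  have hcard : Nat.card α = Nat.card (Fin k × Fin 2) := hk.trans (by simp; omega)
  obtain ⟨e⟩ := Finite.card_eq.1 hcard
  refine ⟨e.symm.permCongr ((Equiv.refl _).prodCongr Fin.revPerm), fun x => ?_, fun x => ?_⟩ <;>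
  · obtain ⟨⟨k, i⟩, rfl⟩ := e.symm.surjective x
    fin_cases i <;> simp [Equiv.permCongr_apply]

theorem exists_equiv_neg_of_card_preimage [Finite α] [AddCommGroup G] [LinearOrder G]
    [IsOrderedAddMonoid G] (w : α → G)
    (hw : ∀ c, 0 < c → Nat.card (w ⁻¹' {-c}) = Nat.card (w ⁻¹' {c})) :
    ∃ e : {i // 0 < w i} ≃ {i // w i < 0}, ∀ i, w (e i) = -w i := by
  have hfiber (c : G) :
      Nonempty ({i : {i // 0 < w i} // w i = c} ≃ {j : {j // w j < 0} // -w j = c}) := by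
    refine Finite.card_eq.1 ?_
    rcases lt_or_ge 0 c with hc | hc
    · calc Nat.card {i : {i // 0 < w i} // w i = c}
          = Nat.card (w ⁻¹' {c}) :=
            Nat.card_congr <| (Equiv.subtypeSubtypeEquivSubtypeInter _ (w · = c)).trans <|
              Equiv.subtypeEquivRight fun i => ⟨And.right, fun h => ⟨h.symm ▸ hc, h⟩⟩
        _ = Nat.card (w ⁻¹' {-c}) := (hw c hc).symm
        _ = Nat.card {j : {j // w j < 0} // -w j = c} :=
            Nat.card_congr <| ((Equiv.subtypeSubtypeEquivSubtypeInter _ (-w · = c)).trans <|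
              Equiv.subtypeEquivRight fun j => ⟨fun h => neg_eq_iff_eq_neg.1 h.2,
                fun h => ⟨h ▸ neg_neg_of_pos hc, neg_eq_iff_eq_neg.2 h⟩⟩).symm
    · have : IsEmpty {i : {i // 0 < w i} // w i = c} :=
        ⟨fun i => (i.1.2.trans_le (i.2.symm ▸ hc)).false⟩
      have : IsEmpty {j : {j // w j < 0} // -w j = c} :=
        ⟨fun j => (hc.trans_lt (j.2 ▸ neg_pos.2 j.1.2)).false⟩
      simp
  refine ⟨Equiv.ofFiberEquiv fun c => (hfiber c).some, fun i => ?_⟩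
  rw [← Equiv.ofFiberEquiv_map (fun c => (hfiber c).some) i, neg_neg]

theorem exists_involutive_add_eq_zero [Finite α] [AddCommGroup G] [LinearOrder G]
    [IsOrderedAddMonoid G] (w : α → G)
    (hw : ∀ c, 0 < c → Nat.card (w ⁻¹' {-c}) = Nat.card (w ⁻¹' {c}))
    (h0 : Even (Nat.card (w ⁻¹' {0}))) :
    ∃ σ : Equiv.Perm α, (∀ i, σ (σ i) = i) ∧ (∀ i, σ i ≠ i) ∧ ∀ i, w i + w (σ i) = 0 := by
  obtain ⟨e, he⟩ := exists_equiv_neg_of_card_preimage w hw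
  obtain ⟨ζ, hζ, hζ'⟩ := exists_involutive_fixedPointFree h0
  let σ : α → α := fun i =>
    if hp : 0 < w i then e ⟨i, hp⟩ else if hn : w i < 0 then e.symm ⟨i, hn⟩
    else ζ ⟨i, le_antisymm (not_lt.1 hp) (not_lt.1 hn)⟩
  have hσp i (h : 0 < w i) : σ i = e ⟨i, h⟩ := dif_pos h
  have hσn i (h : w i < 0) : σ i = e.symm ⟨i, h⟩ := by simp [σ, h, h.not_gt]
  have hσz i (h : w i = 0) : σ i = ζ ⟨i, h⟩ := by simp [σ, h]
  have hneg i : w (σ i) = -w i := by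
    rcases lt_trichotomy (w i) 0 with h | h | h
    · rw [hσn i h, eq_neg_iff_add_eq_zero, ← neg_eq_iff_add_eq_zero, ← he,
        Equiv.apply_symm_apply]
    · rw [hσz i h, (ζ _).2, h, neg_zero]
    · rw [hσp i h, he]
  have hinv : Involutive σ := fun i => by
    rcases lt_trichotomy (w i) 0 with h | h | h
    · rw [hσn i h, hσp _ (e.symm _).2]
      simp
    · rw [hσz i h, hσz _ (ζ _).2, Subtype.coe_eta, hζ]
    · rw [hσp i h, hσn _ (e _).2]
      simp
  refine ⟨hinv.toPerm, hinv, fun i hi => ?_, fun i => by simp [hneg]⟩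
  by_cases h : w i = 0
  · exact hζ' ⟨i, h⟩ (Subtype.ext ((hσz i h).symm.trans hi))
  · have hwi := hneg i
    rw [show σ i = i from hi] at hwi
    exact h (self_eq_neg.1 hwi)

end Pairings

/-- If there is no partition of `{1,…,2m}` into disjoint pairs `(i,j)` with
`λ_i + λ_j = 0` (i.e. no fixed-point-free involution `σ` with
`λ_i + λ_{σ i} = 0` for all `i`), then every 2-form in the span of
`{φ⁰∧φ̄⁰} ∪ {φ^i∧φ^j, φ^i∧φ̄^j, φ̄^i∧φ̄^j : λ_i + λ_j = 0}` is degenerate: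
its `(2m+1)`-st power vanishes. -/
theorem no_partition_implies_degenerate (m : ℕ) (lam : Fin (2 * m) → ℝ)
    {V : Type*} [AddCommGroup V] [Module ℂ V]
    (φ0 φb0 : V) (φ φb : Fin (2 * m) → V)
    (hnopart : ¬ ∃ σ : Equiv.Perm (Fin (2 * m)),
      (∀ i, σ (σ i) = i) ∧ (∀ i, σ i ≠ i) ∧ ∀ i, lam i + lam (σ i) = 0)
    (ω : ExteriorAlgebra ℂ V)
    (hω : ω ∈ Submodule.span ℂ
      ({ι ℂ φ0 * ι ℂ φb0} ∪
        {x | ∃ i j, lam i + lam j = 0 ∧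
          (x = ι ℂ (φ i) * ι ℂ (φ j) ∨ x = ι ℂ (φ i) * ι ℂ (φb j) ∨
            x = ι ℂ (φb i) * ι ℂ (φb j))})) :
    ω ^ (2 * m + 1) = 0 := by
  let v : Bool ⊕ (Fin (2 * m) × Bool) → V :=
    Sum.elim (fun b => cond b φb0 φ0) fun x => cond x.2 (φb x.1) (φ x.1)
  let w : Bool ⊕ (Fin (2 * m) × Bool) → ℝ := Sum.elim (fun _ => 0) fun x => lam x.1
  have hω' : ω ∈ Submodule.span ℂ
      ((fun e : _ × _ => ι ℂ (v e.1) * ι ℂ (v e.2)) '' {e | w e.1 + w e.2 = 0}) := by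
    refine Submodule.span_mono ?_ hω
    rintro x (rfl | ⟨i, j, hij, rfl | rfl | rfl⟩)
    · exact ⟨(.inl false, .inl true), by simp [w], rfl⟩
    · exact ⟨(.inr (i, false), .inr (j, false)), hij, rfl⟩
    · exact ⟨(.inr (i, false), .inr (j, true)), hij, rfl⟩
    · exact ⟨(.inr (i, true), .inr (j, true)), hij, rfl⟩
  by_contra hne
  obtain ⟨g, hg, hgw⟩ := exists_injective_of_pow_ne_zero v _ hω' hne
  have hbij : Bijective g := (Fintype.bijective_iff_injective_and_card g).2 ⟨hg, by simp; ring⟩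
  obtain ⟨τ, hτ⟩ := exists_perm_neg_of_bijective w hbij hgw
  have hcard (S : Set ℝ) (hS : (0 : ℝ) ∉ S) :
      Nat.card (lam ⁻¹' (-S)) = Nat.card (lam ⁻¹' S) := by
    have := card_preimage_neg w τ hτ S
    rwa [card_sumElim_preimage lam Bool hS, card_sumElim_preimage lam Bool (by simpa using hS),
      Nat.mul_left_cancel_iff two_pos] at this
  have hsingleton (c : ℝ) (hc : 0 < c) : Nat.card (lam ⁻¹' {-c}) = Nat.card (lam ⁻¹' {c}) := by
    simpa using hcard {c} (by simpa using hc.ne)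
  have hzero : Even (Nat.card (lam ⁻¹' {0})) :=
    even_card_preimage_zero lam (by simp) (by simpa using hcard (Ioi 0) (by simp))
  exact hnopart (exists_involutive_add_eq_zero lam hsingleton hzero)
end

section
/- Let λ ∈ ℝ \ {0} and consider the derivation d on the exterior algebra on generators φ^1, φ̄^1, φ^2, φ̄^2, ψ^1, ψ̄^1, ψ^2, ψ̄^2 with dφ^i = dφ̄^i = 0 and dψ^1 = -λη∧ψ^1, dψ^2 = λη̄∧ψ^2 (and conjugates), where η = φ^1 + φ̄^2. Then d[(1/λ)·φ^1∧φ̄^1∧φ^2∧ψ^1∧ψ̄^1] = φ^1∧φ̄^1∧φ^2∧φ̄^2∧ψ^1∧ψ̄^1, i.e., the (3,3)-form φ^1∧φ̄^1∧φ^2∧φ̄^2∧ψ^1∧ψ̄^1 is d-exact. -/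
open ExteriorAlgebra

set_option maxHeartbeats 1600000 in
/-- With the structure equations of `N_{μ,P}` for `n = m = 1`
(`η = φ¹ + φ̄²`, `dφ^i = 0`, `dψ¹ = -λη∧ψ¹`, `dψ² = λη̄∧ψ²` and conjugates),
one has `d[(1/λ) φ¹∧φ̄¹∧φ²∧ψ¹∧ψ̄¹] = φ¹∧φ̄¹∧φ²∧φ̄²∧ψ¹∧ψ̄¹`; i.e. the
`(3,3)`-form `φ¹∧φ̄¹∧φ²∧φ̄²∧ψ¹∧ψ̄¹` is `d`-exact. -/
theorem exact_form_nonkahler (lam : ℝ) (hlam : lam ≠ 0)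
    {V : Type*} [AddCommGroup V] [Module ℂ V]
    (φ1 φb1 φ2 φb2 ψ1 ψb1 ψ2 ψb2 : V)
    (d : ExteriorAlgebra ℂ V →ₗ[ℂ] ExteriorAlgebra ℂ V)
    (hleib : ∀ (v : V) (y : ExteriorAlgebra ℂ V),
      d (ι ℂ v * y) = d (ι ℂ v) * y - ι ℂ v * d y)
    (η ηb : V) (hη : η = φ1 + φb2) (hηb : ηb = φb1 + φ2)
    (hdφ1 : d (ι ℂ φ1) = 0) (hdφb1 : d (ι ℂ φb1) = 0)
    (hdφ2 : d (ι ℂ φ2) = 0) (hdφb2 : d (ι ℂ φb2) = 0)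
    (hdψ1 : d (ι ℂ ψ1) = -((lam : ℂ) • (ι ℂ η * ι ℂ ψ1)))
    (hdψ2 : d (ι ℂ ψ2) = (lam : ℂ) • (ι ℂ ηb * ι ℂ ψ2))
    (hdψb1 : d (ι ℂ ψb1) = -((lam : ℂ) • (ι ℂ ηb * ι ℂ ψb1)))
    (hdψb2 : d (ι ℂ ψb2) = (lam : ℂ) • (ι ℂ η * ι ℂ ψb2)) :
    d ((lam : ℂ)⁻¹ • (ι ℂ φ1 * ι ℂ φb1 * ι ℂ φ2 * ι ℂ ψ1 * ι ℂ ψb1)) =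
      ι ℂ φ1 * ι ℂ φb1 * ι ℂ φ2 * ι ℂ φb2 * ι ℂ ψ1 * ι ℂ ψb1 := by
  have swap : ∀ (x y : V) (z : ExteriorAlgebra ℂ V),
      ι ℂ x * (ι ℂ y * z) = -(ι ℂ y * (ι ℂ x * z)) := by
    intro x y z
    have h := ι_add_mul_swap (R := ℂ) x y
    have : ι ℂ x * ι ℂ y = -(ι ℂ y * ι ℂ x) := eq_neg_of_add_eq_zero_left h
    rw [← mul_assoc, this, neg_mul, mul_assoc]
  have sqz : ∀ (x : V) (z : ExteriorAlgebra ℂ V), ι ℂ x * (ι ℂ x * z) = 0 := by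
    intro x z; rw [← mul_assoc, ι_sq_zero, zero_mul]
  have hlamC : (lam : ℂ) ≠ 0 := by exact_mod_cast hlam
  rw [map_smul]
  rw [show ι ℂ φ1 * ι ℂ φb1 * ι ℂ φ2 * ι ℂ ψ1 * ι ℂ ψb1
      = ι ℂ φ1 * (ι ℂ φb1 * (ι ℂ φ2 * (ι ℂ ψ1 * ι ℂ ψb1))) by simp [mul_assoc]]
  rw [hleib φ1, hleib φb1, hleib φ2, hleib ψ1, hdφ1, hdφb1, hdφ2, hdψ1, hdψb1,
    hη, hηb]
  simp only [map_add]
  simp only [zero_mul, zero_sub, mul_neg, neg_neg, mul_sub, add_mul, mul_add,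
    smul_mul_assoc, mul_smul_comm, neg_mul, smul_neg, sub_neg_eq_add, mul_assoc]
  rw [show ι ℂ φ2 * (ι ℂ φ1 * (ι ℂ ψ1 * ι ℂ ψb1))
      = -(ι ℂ φ1 * (ι ℂ φ2 * (ι ℂ ψ1 * ι ℂ ψb1))) from swap _ _ _]
  rw [show ι ℂ φb1 * (-(ι ℂ φ1 * (ι ℂ φ2 * (ι ℂ ψ1 * ι ℂ ψb1))))
      = ι ℂ φ1 * (ι ℂ φb1 * (ι ℂ φ2 * (ι ℂ ψ1 * ι ℂ ψb1))) by
      rw [mul_neg, swap, neg_neg]]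
  rw [sqz φ1]
  rw [show ι ℂ ψ1 * (ι ℂ φb1 * ι ℂ ψb1) = -(ι ℂ φb1 * (ι ℂ ψ1 * ι ℂ ψb1)) from swap _ _ _]
  rw [show ι ℂ φ2 * (-(ι ℂ φb1 * (ι ℂ ψ1 * ι ℂ ψb1)))
      = ι ℂ φb1 * (ι ℂ φ2 * (ι ℂ ψ1 * ι ℂ ψb1)) by rw [mul_neg, swap, neg_neg]]
  rw [show ι ℂ φb1 * (ι ℂ φb1 * (ι ℂ φ2 * (ι ℂ ψ1 * ι ℂ ψb1))) = 0 from sqz _ _]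
  rw [show ι ℂ ψ1 * (ι ℂ φ2 * ι ℂ ψb1) = -(ι ℂ φ2 * (ι ℂ ψ1 * ι ℂ ψb1)) from swap _ _ _]
  rw [show ι ℂ φ2 * (-(ι ℂ φ2 * (ι ℂ ψ1 * ι ℂ ψb1))) = 0 by rw [mul_neg, sqz, neg_zero]]
  simp only [mul_zero, smul_zero, neg_zero, zero_add, add_zero, neg_neg, mul_assoc,
    smul_smul, inv_mul_cancel₀ hlamC, one_smul]
  rw [smul_neg, neg_neg, smul_smul, inv_mul_cancel₀ hlamC, one_smul]
end
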